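/- For every odd prime power q, the number of tuples (y₀, y₁, y₂, y₃, x₁, x₂) ∈ 𝔽_q⁶ satisfying y₀² = 2x₁x₂, y₁² = −2x₁x₂, y₂² = 2x₂ and y₃² = 2x₂ equals 2q² − q + (2q² − 4q + 2)·χ(−1). -/

import Mathlib

/-! Since `y ^ 2 = a` has `1 + χ a` solutions, the count is
`∑ x₂, (1 + χ (2x₂))² ∑ x₁, (1 + χ (2x₂x₁)) (1 + χ (-2x₂x₁))`. For `x₂ ≠ 0` the substitution
`u = 2x₂x₁` turns the inner sum into `∑ u, (1 + χ u) (1 + χ (-u)) = q + (q - 1) χ(-1)`, using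
`∑ χ = 0` and `∑ χ² = q - 1`; the slice `x₂ = 0` contributes `q`, and
`∑ x₂ ≠ 0, (1 + χ (2x₂))² = 2q - 2`. -/

open Finset

theorem Fintype.sum_comp_mul_left {K M : Type*} [GroupWithZero K] [Fintype K] [DecidableEq K]
    [AddCommMonoid M] (f : K → M) (c : K) :
    ∑ x, f (c * x) = if c = 0 then Fintype.card K • f 0 else ∑ x, f x := by
  split_ifs with hc
  · simp [hc]
  · exact Equiv.sum_comp (Equiv.mulLeft₀ c hc) f

theorem Fintype.sum_mul_ite_eq {ι R : Type*} [Fintype ι] [DecidableEq ι] [CommRing R]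
    (h : ι → R) (i : ι) (a b : R) :
    ∑ u, h u * (if u = i then a else b) = b * ∑ u, h u + (a - b) * h i := by
  have split : ∀ u, h u * (if u = i then a else b) =
      b * h u + if u = i then (a - b) * h u else 0 := by
    intro u; split_ifs <;> ring
  simp only [split, sum_add_distrib, ← mul_sum, Fintype.sum_ite_eq']

def solutionsEquivSigma {R : Type*} [CommRing R] : {v : Fin 6 → R //
      v 0 ^ 2 = 2 * (v 4 * v 5) ∧ v 1 ^ 2 = -2 * (v 4 * v 5) ∧
      v 2 ^ 2 = 2 * v 5 ∧ v 3 ^ 2 = 2 * v 5} ≃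
    Σ x₂ : R, Σ x₁ : R, ({y : R // y ^ 2 = 2 * x₂} × {y : R // y ^ 2 = 2 * x₂}) ×
      ({y : R // y ^ 2 = 2 * x₂ * x₁} × {y : R // y ^ 2 = -(2 * x₂ * x₁)}) where
  toFun v := ⟨v.1 5, v.1 4, (⟨v.1 2, v.2.2.2.1⟩, ⟨v.1 3, v.2.2.2.2⟩),
    (⟨v.1 0, by rw [v.2.1]; ring⟩, ⟨v.1 1, by rw [v.2.2.1]; ring⟩)⟩
  invFun := fun ⟨x₂, x₁, (⟨y₂, h₂⟩, ⟨y₃, h₃⟩), (⟨y₀, h₀⟩, ⟨y₁, h₁⟩)⟩ =>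
    ⟨![y₀, y₁, y₂, y₃, x₁, x₂], by
      refine ⟨?_, ?_, h₂, h₃⟩ <;> simp only [Matrix.cons_val]
      exacts [by linear_combination h₀, by linear_combination h₁]⟩
  left_inv v := by
    ext i
    fin_cases i <;> rfl
  right_inv := fun ⟨x₂, x₁, (⟨y₂, h₂⟩, ⟨y₃, h₃⟩), (⟨y₀, h₀⟩, ⟨y₁, h₁⟩)⟩ => rfl

section QuadraticChar

variable {F : Type*} [Field F] [Fintype F] [DecidableEq F]

theorem quadraticChar_natCard_sqrts (hF : ringChar F ≠ 2) (a : F) :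
    (Nat.card {y : F // y ^ 2 = a} : ℤ) = quadraticChar F a + 1 := by
  rw [← quadraticChar_card_sqrts hF, Nat.card_eq_fintype_card, Set.toFinset_card]
  rfl

theorem sum_quadraticChar_sq :
    ∑ u : F, quadraticChar F u ^ 2 = (Fintype.card F - 1 : ℤ) := by
  have hsq : ∀ u : F, quadraticChar F u ^ 2 = if u = 0 then 0 else 1 := by
    intro u
    split_ifs with hu
    · simp [hu]
    · exact quadraticChar_sq_one hu
  rw [Fintype.sum_congr _ _ hsq]
  simp [sum_ite, filter_ne', card_erase_of_mem, Nat.cast_sub Fintype.card_pos]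

theorem sum_one_add_quadraticChar_mul_neg (hF : ringChar F ≠ 2) :
    ∑ u : F, (quadraticChar F u + 1) * (quadraticChar F (-u) + 1) =
      Fintype.card F + (Fintype.card F - 1) * quadraticChar F (-1) := by
  have expand : ∀ u : F, (quadraticChar F u + 1) * (quadraticChar F (-u) + 1) =
      quadraticChar F (-1) * quadraticChar F u ^ 2 + (quadraticChar F (-1) + 1) * quadraticChar F u
        + 1 := by
    intro u
    rw [← neg_one_mul u, map_mul]
    ring
  rw [Fintype.sum_congr _ _ expand, sum_add_distrib, sum_add_distrib, ← mul_sum, ← mul_sum,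
    quadraticChar_sum_zero hF, sum_quadraticChar_sq, sum_const, card_univ, nsmul_one]
  ring

theorem sum_one_add_quadraticChar_sq (hF : ringChar F ≠ 2) :
    ∑ u : F, (quadraticChar F u + 1) ^ 2 = (2 * Fintype.card F - 1 : ℤ) := by
  have expand : ∀ u : F, (quadraticChar F u + 1) ^ 2 =
      quadraticChar F u ^ 2 + 2 * quadraticChar F u + 1 := fun u => by ring
  rw [Fintype.sum_congr _ _ expand, sum_add_distrib, sum_add_distrib, ← mul_sum,
    quadraticChar_sum_zero hF, sum_quadraticChar_sq, sum_const, card_univ, nsmul_one]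
  ring

theorem natCard_solutions_eq_sum (hF : ringChar F ≠ 2) :
    (Nat.card {v : Fin 6 → F //
        v 0 ^ 2 = 2 * (v 4 * v 5) ∧ v 1 ^ 2 = -2 * (v 4 * v 5) ∧
        v 2 ^ 2 = 2 * v 5 ∧ v 3 ^ 2 = 2 * v 5} : ℤ) =
      ∑ x₂ : F, (quadraticChar F (2 * x₂) + 1) ^ 2 *
        ∑ x₁ : F, (quadraticChar F (2 * x₂ * x₁) + 1) * (quadraticChar F (-(2 * x₂ * x₁)) + 1) := by
  rw [Nat.card_congr solutionsEquivSigma]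
  simp only [Nat.card_sigma, Nat.card_prod, Nat.cast_sum, Nat.cast_mul,
    quadraticChar_natCard_sqrts hF]
  simp only [mul_sum, sq]

end QuadraticChar

theorem affine_count_X0_one_X3_zero (F : Type) [Field F] [Fintype F] [DecidableEq F]
    (hodd : ringChar F ≠ 2) :
    (Nat.card {v : Fin 6 → F //
        v 0 ^ 2 = 2 * (v 4 * v 5) ∧ v 1 ^ 2 = -2 * (v 4 * v 5) ∧
        v 2 ^ 2 = 2 * v 5 ∧ v 3 ^ 2 = 2 * v 5} : ℤ) =
      2 * (Fintype.card F : ℤ) ^ 2 - (Fintype.card F : ℤ) +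
        (2 * (Fintype.card F : ℤ) ^ 2 - 4 * (Fintype.card F : ℤ) + 2) *
          quadraticChar F (-1) := by
  have inner_sum (c : F) :
      ∑ x₁ : F, (quadraticChar F (c * x₁) + 1) * (quadraticChar F (-(c * x₁)) + 1) =
        if c = 0 then (Fintype.card F : ℤ)
        else Fintype.card F + (Fintype.card F - 1) * quadraticChar F (-1) := by
    rw [Fintype.sum_comp_mul_left (fun u => (quadraticChar F u + 1) * (quadraticChar F (-u) + 1)),
      sum_one_add_quadraticChar_mul_neg hodd]
    simp
  rw [natCard_solutions_eq_sum hodd]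
  simp only [inner_sum]
  rw [Fintype.sum_comp_mul_left (fun u => (quadraticChar F u + 1) ^ 2 * if u = 0 then _ else _),
    if_neg (Ring.two_ne_zero hodd), Fintype.sum_mul_ite_eq, sum_one_add_quadraticChar_sq hodd]
  simp only [MulChar.map_zero, zero_add, one_pow, mul_one]
  ring
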